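/- Fix λ∈(0,∞) and let Φ denote the standard normal cumulative distribution function. Define the Hüsler–Reiss Pickands dependence function A(w) = (1−w)·Φ(λ + (1/(2λ))·log((1−w)/w)) + w·Φ(λ + (1/(2λ))·log(w/(1−w))) for 0<w<1. Then A is twice continuously differentiable on (0,1) and the function q(z) = w^3·A''(w), with w=1/(1+z) and z∈(0,∞), is exactly the probability density of the lognormal random variable M = exp{2λ(Z−λ)}, where Z is standard normal. In particular, ∫_0^∞ q(z) dz = 1, ∫_0^∞ z·q(z) dz = E[M] = 1, and z·q(z) = z^{−2}·q(1/z) for all z∈(0,∞). -/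

import Mathlib

open MeasureTheory ProbabilityTheory Filter Topology
open scoped ENNReal

/-- The standard normal cumulative distribution function. -/
noncomputable def stdNormalCDF (z : ℝ) : ℝ :=
  (∫ s in Set.Iic z, Real.exp (-s ^ 2 / 2)) / Real.sqrt (2 * Real.pi)

/-- The Hüsler--Reiss Pickands dependence function with parameter `λ`. -/
noncomputable def huslerReissA (lam : ℝ) (w : ℝ) : ℝ :=
  (1 - w) * stdNormalCDF (lam + (1 / (2 * lam)) * Real.log ((1 - w) / w)) +
    w * stdNormalCDF (lam + (1 / (2 * lam)) * Real.log (w / (1 - w)))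

/-- The candidate density `q(z) = w³ A''(w)`, `w = 1/(1+z)`. -/
noncomputable def huslerReissQ (lam : ℝ) (z : ℝ) : ℝ :=
  (1 / (1 + z)) ^ 3 * deriv (deriv (huslerReissA lam)) (1 / (1 + z))

open Set Real

noncomputable def phiR (x : ℝ) : ℝ := Real.exp (-x ^ 2 / 2) / Real.sqrt (2 * Real.pi)

lemma integrable_gauss0 : Integrable (fun s : ℝ => Real.exp (-s ^ 2 / 2)) := by
  have : (fun s : ℝ => Real.exp (-s ^ 2 / 2)) = fun s : ℝ => Real.exp (-(1/2 : ℝ) * s ^ 2) := by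
    ext s; ring_nf
  rw [this]
  exact integrable_exp_neg_mul_sq (by norm_num)

lemma hasDerivAt_stdNormalCDF (x : ℝ) : HasDerivAt stdNormalCDF (phiR x) x := by
  have hint : ∀ z : ℝ, (∫ s in Set.Iic z, Real.exp (-s ^ 2 / 2))
      = (∫ s in Set.Iic (0:ℝ), Real.exp (-s ^ 2 / 2)) + ∫ s in (0:ℝ)..z, Real.exp (-s ^ 2 / 2) := by
    intro z
    have := intervalIntegral.integral_Iic_sub_Iic (μ := volume)
      (f := fun s : ℝ => Real.exp (-s ^ 2 / 2)) (a := (0:ℝ)) (b := z)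
      integrable_gauss0.integrableOn integrable_gauss0.integrableOn
    linarith [this]
  have h1 : HasDerivAt (fun z => ∫ s in (0:ℝ)..z, Real.exp (-s ^ 2 / 2))
      (Real.exp (-x ^ 2 / 2)) x := by
    exact intervalIntegral.integral_hasDerivAt_right
      (integrable_gauss0.intervalIntegrable)
      ((Real.continuous_exp.comp (by continuity)).stronglyMeasurable.stronglyMeasurableAtFilter)
      ((Real.continuous_exp.comp (by continuity)).continuousAt)
  have : HasDerivAt (fun z => ((∫ s in Set.Iic (0:ℝ), Real.exp (-s ^ 2 / 2))
      + ∫ s in (0:ℝ)..z, Real.exp (-s ^ 2 / 2)) / Real.sqrt (2 * Real.pi))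
      (Real.exp (-x ^ 2 / 2) / Real.sqrt (2 * Real.pi)) x := by
    simpa using ((hasDerivAt_const x _).add h1).div_const (Real.sqrt (2 * Real.pi))
  refine HasDerivAt.congr_of_eventuallyEq this ?_
  filter_upwards with z
  rw [stdNormalCDF, hint z]

lemma contDiff_phiR : ContDiff ℝ (⊤ : ℕ∞) phiR := by
  unfold phiR
  exact (Real.contDiff_exp.comp ((contDiff_id.pow 2).neg.div_const 2)).div_const _

lemma deriv_stdNormalCDF : deriv stdNormalCDF = phiR :=
  funext fun x => (hasDerivAt_stdNormalCDF x).deriv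

lemma contDiff_stdNormalCDF : ContDiff ℝ 2 stdNormalCDF := by
  have : ContDiff ℝ ((⊤ : ℕ∞) : WithTop ℕ∞) stdNormalCDF := by
    rw [contDiff_infty_iff_deriv]
    refine ⟨fun x => (hasDerivAt_stdNormalCDF x).differentiableAt, ?_⟩
    rw [deriv_stdNormalCDF]; exact contDiff_phiR.of_le (mod_cast le_top)
  exact this.of_le (by norm_cast)

noncomputable def hAf (lam w : ℝ) : ℝ := lam + (1 / (2 * lam)) * Real.log ((1 - w) / w)
noncomputable def hBf (lam w : ℝ) : ℝ := lam + (1 / (2 * lam)) * Real.log (w / (1 - w))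
noncomputable def gf (lam w : ℝ) : ℝ := stdNormalCDF (hBf lam w) - stdNormalCDF (hAf lam w)
noncomputable def Bf (lam w : ℝ) : ℝ :=
  (1 / (2 * lam)) * (1 / (w * (1 - w))) * (phiR (hBf lam w) + phiR (hAf lam w))

section
variable {lam : ℝ}

lemma key_exp (hlam : 0 < lam) {t : ℝ} (ht : 0 < t) :
    t * phiR (lam + (1 / (2 * lam)) * Real.log t)
      = phiR (lam - (1 / (2 * lam)) * Real.log t) := by
  have hl : lam ≠ 0 := ne_of_gt hlam
  unfold phiR
  have h1 : -(lam - (1 / (2 * lam)) * Real.log t) ^ 2 / 2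
      = -(lam + (1 / (2 * lam)) * Real.log t) ^ 2 / 2 + Real.log t := by
    field_simp
    ring
  rw [h1, Real.exp_add, Real.exp_log ht]
  ring

lemma hasDerivAt_log_ratio {w : ℝ} (hw : w ∈ Set.Ioo (0:ℝ) 1) :
    HasDerivAt (fun w : ℝ => Real.log ((1 - w) / w)) (-(1 / (w * (1 - w)))) w := by
  have hw0 : (0:ℝ) < w := hw.1
  have hw1 : w < 1 := hw.2
  have h1w : (0:ℝ) < 1 - w := by linarith
  have hd : HasDerivAt (fun w : ℝ => Real.log (1 - w) - Real.log w)
      (-1 / (1 - w) - 1 / w) w := by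
    have hA : HasDerivAt (fun w : ℝ => Real.log (1 - w)) (-1 / (1 - w)) w := by
      have : HasDerivAt (fun w : ℝ => 1 - w) (-1) w := by
        simpa using (hasDerivAt_id w).const_sub 1
      simpa using this.log (ne_of_gt h1w)
    have hB : HasDerivAt Real.log (1 / w) w := by
      simpa [one_div] using Real.hasDerivAt_log (ne_of_gt hw0)
    exact hA.sub hB
  have heq : (fun w : ℝ => Real.log (1 - w) - Real.log w)
      =ᶠ[𝓝 w] fun w : ℝ => Real.log ((1 - w) / w) := by
    have : Set.Ioo (0:ℝ) 1 ∈ 𝓝 w := (isOpen_Ioo).mem_nhds hw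
    filter_upwards [this] with x hx
    rw [Real.log_div (by linarith [hx.2]) (ne_of_gt hx.1)]
  have := hd.congr_of_eventuallyEq heq.symm
  refine this.congr_deriv ?_
  field_simp
  ring

lemma hasDerivAt_log_ratio' {w : ℝ} (hw : w ∈ Set.Ioo (0:ℝ) 1) :
    HasDerivAt (fun w : ℝ => Real.log (w / (1 - w))) (1 / (w * (1 - w))) w := by
  have hw0 : (0:ℝ) < w := hw.1
  have h1w : (0:ℝ) < 1 - w := by linarith [hw.2]
  have heq : (fun w : ℝ => Real.log (w / (1 - w)))
      =ᶠ[𝓝 w] fun w : ℝ => -Real.log ((1 - w) / w) := by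
    have : Set.Ioo (0:ℝ) 1 ∈ 𝓝 w := (isOpen_Ioo).mem_nhds hw
    filter_upwards [this] with x hx
    rw [← Real.log_inv, inv_div]
  have := ((hasDerivAt_log_ratio hw).neg).congr_of_eventuallyEq heq
  simpa using this

lemma hasDerivAt_hA (hlam : 0 < lam) {w : ℝ} (hw : w ∈ Set.Ioo (0:ℝ) 1) :
    HasDerivAt (hAf lam) (-(1 / (2 * lam)) * (1 / (w * (1 - w)))) w := by
  have := ((hasDerivAt_log_ratio hw).const_mul (1 / (2 * lam))).const_add lam
  refine this.congr_deriv ?_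
  ring

lemma hasDerivAt_hB (hlam : 0 < lam) {w : ℝ} (hw : w ∈ Set.Ioo (0:ℝ) 1) :
    HasDerivAt (hBf lam) ((1 / (2 * lam)) * (1 / (w * (1 - w)))) w := by
  exact ((hasDerivAt_log_ratio' hw).const_mul (1 / (2 * lam))).const_add lam

lemma identity_phi (hlam : 0 < lam) {w : ℝ} (hw : w ∈ Set.Ioo (0:ℝ) 1) :
    (1 - w) * phiR (hAf lam w) = w * phiR (hBf lam w) := by
  have hw0 : (0:ℝ) < w := hw.1
  have h1w : (0:ℝ) < 1 - w := by linarith [hw.2]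
  have ht : (0:ℝ) < (1 - w) / w := div_pos h1w hw0
  have hk := key_exp hlam ht
  have hB : hBf lam w = lam - (1 / (2 * lam)) * Real.log ((1 - w) / w) := by
    rw [hBf, show w / (1 - w) = ((1 - w) / w)⁻¹ by rw [inv_div], Real.log_inv]
    ring
  rw [hB, ← hk, hAf]
  field_simp

lemma hasDerivAt_A (hlam : 0 < lam) {w : ℝ} (hw : w ∈ Set.Ioo (0:ℝ) 1) :
    HasDerivAt (huslerReissA lam) (gf lam w) w := by
  have hw0 : (0:ℝ) < w := hw.1
  have h1w : (0:ℝ) < 1 - w := by linarith [hw.2]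
  set d : ℝ := (1 / (2 * lam)) * (1 / (w * (1 - w))) with hd
  have hPA : HasDerivAt (fun w => stdNormalCDF (hAf lam w)) (phiR (hAf lam w) * (-d)) w :=
    (hasDerivAt_stdNormalCDF (hAf lam w)).comp w (by simpa [hd, neg_mul] using hasDerivAt_hA hlam hw)
  have hPB : HasDerivAt (fun w => stdNormalCDF (hBf lam w)) (phiR (hBf lam w) * d) w :=
    (hasDerivAt_stdNormalCDF (hBf lam w)).comp w (hasDerivAt_hB hlam hw)
  have h1 : HasDerivAt (fun w : ℝ => (1 - w) * stdNormalCDF (hAf lam w))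
      ((-1) * stdNormalCDF (hAf lam w) + (1 - w) * (phiR (hAf lam w) * (-d))) w := by
    exact HasDerivAt.mul (by simpa using (hasDerivAt_id w).const_sub 1) hPA
  have h2 : HasDerivAt (fun w : ℝ => w * stdNormalCDF (hBf lam w))
      (1 * stdNormalCDF (hBf lam w) + w * (phiR (hBf lam w) * d)) w :=
    HasDerivAt.mul (hasDerivAt_id w) hPB
  have h3 := h1.add h2
  have hval : (-1) * stdNormalCDF (hAf lam w) + (1 - w) * (phiR (hAf lam w) * (-d))
      + (1 * stdNormalCDF (hBf lam w) + w * (phiR (hBf lam w) * d)) = gf lam w := by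
    have hid := identity_phi hlam hw
    rw [gf]
    linear_combination (-d) * hid
  rw [hval] at h3
  exact h3.congr_of_eventuallyEq (by filter_upwards with x; simp only [huslerReissA, Pi.add_apply, hAf, hBf])

lemma hasDerivAt_g (hlam : 0 < lam) {w : ℝ} (hw : w ∈ Set.Ioo (0:ℝ) 1) :
    HasDerivAt (gf lam) (Bf lam w) w := by
  set d : ℝ := (1 / (2 * lam)) * (1 / (w * (1 - w))) with hd
  have hPA : HasDerivAt (fun w => stdNormalCDF (hAf lam w)) (phiR (hAf lam w) * (-d)) w :=
    (hasDerivAt_stdNormalCDF (hAf lam w)).comp w (by simpa [hd, neg_mul] using hasDerivAt_hA hlam hw)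
  have hPB : HasDerivAt (fun w => stdNormalCDF (hBf lam w)) (phiR (hBf lam w) * d) w :=
    (hasDerivAt_stdNormalCDF (hBf lam w)).comp w (hasDerivAt_hB hlam hw)
  have := hPB.sub hPA
  refine this.congr_deriv ?_
  rw [Bf, hd]
  ring

lemma deriv2_A (hlam : 0 < lam) {w : ℝ} (hw : w ∈ Set.Ioo (0:ℝ) 1) :
    deriv (deriv (huslerReissA lam)) w = Bf lam w := by
  have heq : deriv (huslerReissA lam) =ᶠ[𝓝 w] gf lam := by
    filter_upwards [isOpen_Ioo.mem_nhds hw] with x hx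
    exact (hasDerivAt_A hlam hx).deriv
  rw [heq.deriv_eq]
  exact (hasDerivAt_g hlam hw).deriv

lemma q_closed (hlam : 0 < lam) {z : ℝ} (hz : 0 < z) :
    huslerReissQ lam z = 1 / (2 * lam * z) * phiR (lam + (1 / (2 * lam)) * Real.log z) := by
  have h1z : (0:ℝ) < 1 + z := by linarith
  set w : ℝ := 1 / (1 + z) with hwdef
  have hw : w ∈ Set.Ioo (0:ℝ) 1 := by
    constructor
    · positivity
    · rw [hwdef, div_lt_one h1z]; linarith
  have h1w : 1 - w = z / (1 + z) := by rw [hwdef]; field_simp; ring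
  have hr1 : (1 - w) / w = z := by rw [h1w, hwdef]; field_simp
  have hr2 : w / (1 - w) = 1 / z := by rw [h1w, hwdef]; field_simp
  have hA : hAf lam w = lam + (1 / (2 * lam)) * Real.log z := by rw [hAf, hr1]
  have hB : hBf lam w = lam - (1 / (2 * lam)) * Real.log z := by
    rw [hBf, hr2, show Real.log (1/z) = -Real.log z by rw [one_div, Real.log_inv]]; ring
  have hkey := key_exp hlam hz
  rw [huslerReissQ, deriv2_A hlam hw, Bf, hA, hB, ← hwdef, ← hkey]
  rw [hwdef]
  have hzne : z ≠ 0 := ne_of_gt hz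
  have h1zne : (1:ℝ) + z ≠ 0 := ne_of_gt h1z
  have hlne : lam ≠ 0 := ne_of_gt hlam
  field_simp
  ring_nf
  field_simp
  ring
end

section Main
variable {lam : ℝ}

lemma contDiffOn_A (lam : ℝ) : ContDiffOn ℝ 2 (huslerReissA lam) (Set.Ioo (0:ℝ) 1) := by
  have h1 : ContDiffOn ℝ 2 (fun w : ℝ => (1 - w) / w) (Set.Ioo (0:ℝ) 1) :=
    ContDiffOn.div (contDiff_const.sub contDiff_id).contDiffOn contDiff_id.contDiffOn
      (fun x hx => ne_of_gt hx.1)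
  have h2 : ContDiffOn ℝ 2 (fun w : ℝ => w / (1 - w)) (Set.Ioo (0:ℝ) 1) :=
    ContDiffOn.div contDiff_id.contDiffOn (contDiff_const.sub contDiff_id).contDiffOn
      (fun x hx => by have := hx.2; intro h; linarith [sub_eq_zero.mp h])
  have hl1 : ContDiffOn ℝ 2 (fun w : ℝ => Real.log ((1 - w) / w)) (Set.Ioo (0:ℝ) 1) :=
    h1.log (fun x hx => ne_of_gt (div_pos (by linarith [hx.2]) hx.1))
  have hl2 : ContDiffOn ℝ 2 (fun w : ℝ => Real.log (w / (1 - w))) (Set.Ioo (0:ℝ) 1) :=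
    h2.log (fun x hx => ne_of_gt (div_pos hx.1 (by linarith [hx.2])))
  have hc1 : ContDiffOn ℝ 2
      (fun w : ℝ => stdNormalCDF (lam + (1 / (2 * lam)) * Real.log ((1 - w) / w)))
      (Set.Ioo (0:ℝ) 1) :=
    contDiff_stdNormalCDF.comp_contDiffOn
      (contDiffOn_const.add (contDiffOn_const.mul hl1))
  have hc2 : ContDiffOn ℝ 2
      (fun w : ℝ => stdNormalCDF (lam + (1 / (2 * lam)) * Real.log (w / (1 - w))))
      (Set.Ioo (0:ℝ) 1) :=
    contDiff_stdNormalCDF.comp_contDiffOn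
      (contDiffOn_const.add (contDiffOn_const.mul hl2))
  exact (((contDiff_const.sub contDiff_id).contDiffOn).mul hc1).add
    ((contDiff_id.contDiffOn).mul hc2)

lemma measurable_Q (lam : ℝ) : Measurable (huslerReissQ lam) := by
  have hm : Measurable (fun z : ℝ => 1 / (1 + z)) :=
    measurable_const.div (measurable_id.const_add 1)
  exact (hm.pow_const 3).mul ((measurable_deriv _).comp hm)

lemma Q_nonneg (hlam : 0 < lam) {z : ℝ} (hz : z ∈ Set.Ioi (0:ℝ)) : 0 ≤ huslerReissQ lam z := by
  have hz' : (0:ℝ) < z := hz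
  rw [q_closed hlam hz']
  have : 0 ≤ phiR (lam + (1 / (2 * lam)) * Real.log z) := by
    unfold phiR; positivity
  have h2 : (0:ℝ) ≤ 1 / (2 * lam * z) := by positivity
  exact mul_nonneg h2 this

lemma hasDerivAt_T (hlam : 0 < lam) (x : ℝ) :
    HasDerivAt (fun z : ℝ => Real.exp (2 * lam * (z - lam)))
      (2 * lam * Real.exp (2 * lam * (x - lam))) x := by
  have hin : HasDerivAt (fun z : ℝ => 2 * lam * (z - lam)) (2 * lam) x := by
    simpa using ((hasDerivAt_id x).sub_const lam).const_mul (2 * lam)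
  simpa [mul_comm, Function.comp_def] using (Real.hasDerivAt_exp _).comp x hin

lemma range_T (hlam : 0 < lam) :
    Set.range (fun z : ℝ => Real.exp (2 * lam * (z - lam))) = Set.Ioi (0:ℝ) := by
  ext y
  simp only [Set.mem_range, Set.mem_Ioi]
  constructor
  · rintro ⟨x, rfl⟩; exact Real.exp_pos _
  · intro hy
    refine ⟨lam + Real.log y / (2 * lam), ?_⟩
    rw [show 2 * lam * (lam + Real.log y / (2 * lam) - lam) = Real.log y by
        field_simp; ring,
      Real.exp_log hy]

lemma injective_T (hlam : 0 < lam) :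
    Function.Injective (fun z : ℝ => Real.exp (2 * lam * (z - lam))) := by
  intro a b hab
  have h := Real.exp_injective hab
  have h2 : (2 * lam) ≠ 0 := by positivity
  have : a - lam = b - lam := mul_left_cancel₀ h2 h
  linarith

lemma pdf_eq_phiR (x : ℝ) : gaussianPDFReal 0 1 x = phiR x := by
  rw [gaussianPDFReal, phiR]
  simp only [NNReal.coe_one, mul_one, sub_zero]
  rw [div_eq_inv_mul]
  ring_nf

lemma T_comp_q (hlam : 0 < lam) (x : ℝ) :
    (2 * lam * Real.exp (2 * lam * (x - lam))) *
      huslerReissQ lam (Real.exp (2 * lam * (x - lam))) = phiR x := by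
  have hTpos : 0 < Real.exp (2 * lam * (x - lam)) := Real.exp_pos _
  rw [q_closed hlam hTpos, Real.log_exp]
  have harg : lam + 1 / (2 * lam) * (2 * lam * (x - lam)) = x := by
    field_simp
    ring
  rw [harg]
  field_simp

lemma measure_eq (hlam : 0 < lam) :
    ((gaussianReal 0 1).map fun z => Real.exp (2 * lam * (z - lam)))
      = volume.withDensity
          (fun z => ENNReal.ofReal (Set.indicator (Set.Ioi (0:ℝ)) (huslerReissQ lam) z)) := by
  set T : ℝ → ℝ := fun z => Real.exp (2 * lam * (z - lam)) with hT
  have hTmeas : Measurable T :=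
    (Real.continuous_exp.comp (by continuity)).measurable
  refine Measure.ext fun s hs => ?_
  rw [Measure.map_apply hTmeas hs, gaussianReal_of_var_ne_zero 0 one_ne_zero,
    withDensity_apply _ (hTmeas hs), withDensity_apply _ hs]
  have hind : (fun z => ENNReal.ofReal (Set.indicator (Set.Ioi (0:ℝ)) (huslerReissQ lam) z))
      = Set.indicator (Set.Ioi (0:ℝ)) (fun z => ENNReal.ofReal (huslerReissQ lam z)) := by
    funext z
    by_cases hz : z ∈ Set.Ioi (0:ℝ)
    · rw [Set.indicator_of_mem hz, Set.indicator_of_mem hz]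
    · rw [Set.indicator_of_notMem hz, Set.indicator_of_notMem hz, ENNReal.ofReal_zero]
  rw [hind, lintegral_indicator measurableSet_Ioi, Measure.restrict_restrict measurableSet_Ioi]
  have himg : Set.Ioi (0:ℝ) ∩ s = T '' (T ⁻¹' s) := by
    rw [Set.image_preimage_eq_inter_range, hT, range_T hlam, Set.inter_comm]
  rw [himg]
  have hchg := lintegral_image_eq_lintegral_abs_det_fderiv_mul volume (hTmeas hs)
    (f' := fun x => (1 : ℝ →L[ℝ] ℝ).smulRight (2 * lam * T x))
    (fun x _ => ((hasDerivAt_T hlam x).hasDerivWithinAt).hasFDerivWithinAt)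
    ((injective_T hlam).injOn)
    (fun z => ENNReal.ofReal (huslerReissQ lam z))
  rw [hchg]
  refine setLIntegral_congr_fun (hTmeas hs) (fun x _ => ?_)
  rw [ContinuousLinearMap.smulRight_one_eq_toSpanSingleton, ContinuousLinearMap.det_toSpanSingleton]
  have hTpos : 0 < T x := Real.exp_pos _
  have habs : |2 * lam * T x| = 2 * lam * T x := abs_of_pos (by positivity)
  rw [habs, ← ENNReal.ofReal_mul (by positivity), T_comp_q hlam x, gaussianPDF_def]
  simp only [pdf_eq_phiR]
end Main

section Main2
variable {lam : ℝ}

lemma lintegral_Q (hlam : 0 < lam) :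
    ∫⁻ z in Set.Ioi (0:ℝ), ENNReal.ofReal (huslerReissQ lam z) = 1 := by
  have h := measure_eq hlam
  have hTmeas : Measurable (fun z : ℝ => Real.exp (2 * lam * (z - lam))) :=
    ((measurable_id.sub_const lam).const_mul (2 * lam)).exp
  have h1 : ((gaussianReal 0 1).map fun z => Real.exp (2 * lam * (z - lam))) Set.univ = 1 := by
    rw [Measure.map_apply hTmeas MeasurableSet.univ]
    simp
  rw [h] at h1
  rw [withDensity_apply _ MeasurableSet.univ, Measure.restrict_univ] at h1
  have hind : (fun z => ENNReal.ofReal (Set.indicator (Set.Ioi (0:ℝ)) (huslerReissQ lam) z))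
      = Set.indicator (Set.Ioi (0:ℝ)) (fun z => ENNReal.ofReal (huslerReissQ lam z)) := by
    funext z
    by_cases hz : z ∈ Set.Ioi (0:ℝ)
    · rw [Set.indicator_of_mem hz, Set.indicator_of_mem hz]
    · rw [Set.indicator_of_notMem hz, Set.indicator_of_notMem hz, ENNReal.ofReal_zero]
  rwa [hind, lintegral_indicator measurableSet_Ioi] at h1

lemma integral_Q (hlam : 0 < lam) : (∫ z in Set.Ioi (0:ℝ), huslerReissQ lam z) = 1 := by
  rw [integral_eq_lintegral_of_nonneg_ae
    ((ae_restrict_iff' measurableSet_Ioi).2 (ae_of_all _ fun z hz => Q_nonneg hlam hz))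
    (measurable_Q lam).aestronglyMeasurable]
  rw [lintegral_Q hlam]
  simp

lemma integral_E (hlam : 0 < lam) :
    (∫ z, Real.exp (2 * lam * (z - lam)) ∂(gaussianReal 0 1)) = 1 := by
  rw [gaussianReal_of_var_ne_zero 0 one_ne_zero]
  have hmeas : Measurable (fun x : ℝ => (gaussianPDFReal 0 1 x).toNNReal) :=
    (measurable_gaussianPDFReal 0 1).real_toNNReal
  have hdens : gaussianPDF 0 1 = fun x => ((gaussianPDFReal 0 1 x).toNNReal : ℝ≥0∞) := rfl
  rw [hdens, integral_withDensity_eq_integral_smul hmeas]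
  have heq : ∀ x : ℝ, (gaussianPDFReal 0 1 x).toNNReal • Real.exp (2 * lam * (x - lam))
      = gaussianPDFReal (2 * lam) 1 x := by
    intro x
    rw [NNReal.smul_def, Real.coe_toNNReal _ (gaussianPDFReal_nonneg 0 1 x), smul_eq_mul]
    rw [gaussianPDFReal, gaussianPDFReal]
    simp only [NNReal.coe_one, mul_one, sub_zero]
    rw [mul_assoc, ← Real.exp_add]
    congr 1
    ring
  simp_rw [heq]
  exact integral_gaussianPDFReal_eq_one (2 * lam) one_ne_zero

lemma integral_zQ (hlam : 0 < lam) :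
    (∫ z in Set.Ioi (0:ℝ), z * huslerReissQ lam z) = 1 := by
  have hTmeas : Measurable (fun z : ℝ => Real.exp (2 * lam * (z - lam))) :=
    ((measurable_id.sub_const lam).const_mul (2 * lam)).exp
  have h1 : (∫ x, x ∂((gaussianReal 0 1).map fun z => Real.exp (2 * lam * (z - lam))))
      = ∫ z, Real.exp (2 * lam * (z - lam)) ∂(gaussianReal 0 1) := by
    exact integral_map hTmeas.aemeasurable aestronglyMeasurable_id
  rw [integral_E hlam] at h1
  rw [measure_eq hlam] at h1
  set q0 : ℝ → ℝ := Set.indicator (Set.Ioi (0:ℝ)) (huslerReissQ lam) with hq0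
  have hq0m : Measurable q0 := (measurable_Q lam).indicator measurableSet_Ioi
  have hq0nn : ∀ z, 0 ≤ q0 z := by
    intro z
    by_cases hz : z ∈ Set.Ioi (0:ℝ)
    · rw [hq0, Set.indicator_of_mem hz]; exact Q_nonneg hlam hz
    · rw [hq0, Set.indicator_of_notMem hz]
  have hdens : (fun z => ENNReal.ofReal (q0 z)) = fun z => ((q0 z).toNNReal : ℝ≥0∞) :=
    rfl
  rw [hdens, integral_withDensity_eq_integral_smul hq0m.real_toNNReal] at h1
  have heq : ∀ x : ℝ, (q0 x).toNNReal • x = Set.indicator (Set.Ioi (0:ℝ))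
      (fun z => z * huslerReissQ lam z) x := by
    intro x
    rw [NNReal.smul_def, Real.coe_toNNReal _ (hq0nn x), smul_eq_mul]
    by_cases hx : x ∈ Set.Ioi (0:ℝ)
    · rw [Set.indicator_of_mem hx, hq0, Set.indicator_of_mem hx, mul_comm]
    · rw [Set.indicator_of_notMem hx, hq0, Set.indicator_of_notMem hx, zero_mul]
  rw [← h1]
  simp_rw [heq]
  rw [integral_indicator measurableSet_Ioi]

lemma symmetry_Q (hlam : 0 < lam) {z : ℝ} (hz : 0 < z) :
    z * huslerReissQ lam z = z ^ (-2 : ℝ) * huslerReissQ lam (1 / z) := by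
  have hz1 : (0:ℝ) < 1 / z := by positivity
  rw [q_closed hlam hz, q_closed hlam hz1]
  have hlog : Real.log (1 / z) = -Real.log z := by rw [one_div, Real.log_inv]
  rw [hlog]
  have hrpow : z ^ (-2 : ℝ) = (z ^ 2)⁻¹ := by
    rw [Real.rpow_neg hz.le, show ((2:ℝ)) = ((2:ℕ):ℝ) by norm_num, Real.rpow_natCast]
  rw [hrpow]
  have hkey := key_exp hlam hz
  have : lam + 1 / (2 * lam) * -Real.log z = lam - 1 / (2 * lam) * Real.log z := by ring
  rw [this, ← hkey]
  have hzne : z ≠ 0 := ne_of_gt hz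
  have hlne : lam ≠ 0 := ne_of_gt hlam
  field_simp
end Main2


/-- the Hüsler--Reiss Pickands dependence function `A` is twice
continuously differentiable on `(0,1)`, and `q(z) = w³ A''(w)` (with `w = 1/(1+z)`) is
exactly the probability density on `(0,∞)` of the lognormal variable
`M = exp(2λ(Z-λ))` with `Z` standard normal; in particular `∫_0^∞ q = 1`,
`∫_0^∞ z q(z) dz = E[M] = 1` and `z q(z) = z⁻² q(1/z)` for all `z > 0`. -/
theorem husler_reiss_tail_density (lam : ℝ) (hlam : 0 < lam) :
    ContDiffOn ℝ 2 (huslerReissA lam) (Set.Ioo (0:ℝ) 1) ∧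
    ((gaussianReal 0 1).map fun z => Real.exp (2 * lam * (z - lam)))
      = volume.withDensity
          (fun z => ENNReal.ofReal (Set.indicator (Set.Ioi (0:ℝ)) (huslerReissQ lam) z)) ∧
    (∫ z in Set.Ioi (0:ℝ), huslerReissQ lam z) = 1 ∧
    (∫ z in Set.Ioi (0:ℝ), z * huslerReissQ lam z) = 1 ∧
    (∫ z, Real.exp (2 * lam * (z - lam)) ∂(gaussianReal 0 1)) = 1 ∧
    (∀ z : ℝ, 0 < z →
      z * huslerReissQ lam z = z ^ (-2 : ℝ) * huslerReissQ lam (1 / z)) := by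
  exact ⟨contDiffOn_A lam, measure_eq hlam, integral_Q hlam, integral_zQ hlam,
    integral_E hlam, fun z hz => symmetry_Q hlam hz⟩
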